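/- For all A, B ∈ 𝔄, the reflection respects the twisted product: Θ(A ∘ B) = Θ(A) ∘ Θ(B). -/

import Mathlib

open ComplexOrder

noncomputable section

/-- The setting of the paper: a finite set `Λ` with a fixed-point free involution `ϑ`
exchanging `Λp` and its complement, the Clifford algebra (algebra of Majoranas) `carrier`
with self-adjoint generators `c i`, the global gauge automorphism `gauge`, the antilinear
reflection `*`-automorphism `Θ`, a square root `ζ` of `-1`, the twisted product `twist`,
a choice `P` of orderings of the subsets of `Λp` (giving the bases
`{C J : J ∈ P}` of `𝔄₊` and `{Θ(C J) ∘ C J' : J, J' ∈ P}` of `𝔄`),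
and the tracial state `Tr` picking out the coefficient of `1` in the basis expansion. -/
structure MajoranaSetting where
  Λ : Type
  [fintypeΛ : Fintype Λ]
  [deceqΛ : DecidableEq Λ]
  ϑ : Λ → Λ
  ϑ_invol : Function.Involutive ϑ
  ϑ_fixfree : ∀ i, ϑ i ≠ i
  Λp : Finset Λ
  ϑ_exch : ∀ i, i ∈ Λp ↔ ϑ i ∉ Λp
  carrier : Type
  [nring : NormedRing carrier]
  [nalg : NormedAlgebra ℂ carrier]
  [cmpl : CompleteSpace carrier]
  [starring : StarRing carrier]
  [starmod : StarModule ℂ carrier]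
  c : Λ → carrier
  c_star : ∀ i, star (c i) = c i
  clifford : ∀ i j, c i * c j + c j * c i = if i = j then (2 : carrier) else 0
  gauge : carrier ≃ₐ[ℂ] carrier
  gauge_c : ∀ i, gauge (c i) = - c i
  Θ : carrier → carrier
  Θ_add : ∀ x y, Θ (x + y) = Θ x + Θ y
  Θ_smul : ∀ (z : ℂ) (x), Θ (z • x) = (starRingEnd ℂ z) • Θ x
  Θ_mul : ∀ x y, Θ (x * y) = Θ x * Θ y
  Θ_star : ∀ x, Θ (star x) = star (Θ x)
  Θ_invol : ∀ x, Θ (Θ x) = x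
  Θ_c : ∀ i, Θ (c i) = c (ϑ i)
  ζ : ℂ
  ζ_sq : ζ ^ 2 = -1
  twist : carrier → carrier → carrier
  twist_add_left : ∀ x x' y, twist (x + x') y = twist x y + twist x' y
  twist_add_right : ∀ x y y', twist x (y + y') = twist x y + twist x y'
  twist_smul_left : ∀ (z : ℂ) (x y), twist (z • x) y = z • twist x y
  twist_smul_right : ∀ (z : ℂ) (x y), twist x (z • y) = z • twist x y
  twist_spec : ∀ (Am Ap Bm Bp : carrier) (a b a' b' : ℕ),
    a ≤ 1 → b ≤ 1 → a' ≤ 1 → b' ≤ 1 →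
    Am ∈ Algebra.adjoin ℂ (c '' {i | i ∉ Λp}) →
    Ap ∈ Algebra.adjoin ℂ (c '' {i | i ∈ Λp}) →
    Bm ∈ Algebra.adjoin ℂ (c '' {i | i ∉ Λp}) →
    Bp ∈ Algebra.adjoin ℂ (c '' {i | i ∈ Λp}) →
    gauge Am = ((-1 : ℂ) ^ a) • Am →
    gauge Ap = ((-1 : ℂ) ^ b) • Ap →
    gauge Bm = ((-1 : ℂ) ^ a') • Bm →
    gauge Bp = ((-1 : ℂ) ^ b') • Bp →
    twist (Am * Ap) (Bm * Bp)
      = ζ ^ ((a * b' : ℤ) - (b * a' : ℤ)) • (Am * Ap * (Bm * Bp))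
  P : Finset (List Λ)
  P_nodup : ∀ J ∈ P, J.Nodup
  P_sub : ∀ J ∈ P, ∀ i ∈ J, i ∈ Λp
  P_unique : ∀ s : Finset Λ, s ⊆ Λp → ∃! J, J ∈ P ∧ J.toFinset = s
  Tr : carrier →ₗ[ℂ] ℂ
  Tr_basis : ∀ J ∈ P, ∀ J' ∈ P,
    Tr (twist (Θ ((J.map c).prod)) ((J'.map c).prod))
      = if J = [] ∧ J' = [] then 1 else 0
  basis_indep : LinearIndependent ℂ
    (fun p : {J // J ∈ P} × {J // J ∈ P} =>
      twist (Θ ((p.1.1.map c).prod)) ((p.2.1.map c).prod))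
  basis_span : ∀ x : carrier, x ∈ Submodule.span ℂ
    (Set.range fun p : {J // J ∈ P} × {J // J ∈ P} =>
      twist (Θ ((p.1.1.map c).prod)) ((p.2.1.map c).prod))
  plus_span : ∀ x ∈ Algebra.adjoin ℂ (c '' {i | i ∈ Λp}),
    x ∈ Submodule.span ℂ (Set.range fun J : {J // J ∈ P} => ((J.1.map c).prod))

attribute [instance] MajoranaSetting.fintypeΛ MajoranaSetting.deceqΛ
  MajoranaSetting.nring MajoranaSetting.nalg MajoranaSetting.cmpl
  MajoranaSetting.starring MajoranaSetting.starmod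

namespace MajoranaSetting

variable (S : MajoranaSetting)

/-- The subalgebra `𝔄₊` generated by the Majoranas on the `+` side. -/
def Aplus : Subalgebra ℂ S.carrier := Algebra.adjoin ℂ (S.c '' {i | i ∈ S.Λp})

/-- The subalgebra `𝔄₋` generated by the Majoranas on the `-` side. -/
def Aminus : Subalgebra ℂ S.carrier := Algebra.adjoin ℂ (S.c '' {i | i ∉ S.Λp})

/-- The monomial `C_𝔍 = c_{i₁} ⋯ c_{i_k}`. -/
def C (J : List S.Λ) : S.carrier := (J.map S.c).prod

/-- `q_𝔍 = (-1)^{k(k-1)/2}`. -/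
def q (J : List S.Λ) : ℂ := (-1 : ℂ) ^ (J.length * (J.length - 1) / 2)

/-- `s_𝔍 = ζ^{k(k-1)/2}`. -/
def sgn (J : List S.Λ) : ℂ := S.ζ ^ (J.length * (J.length - 1) / 2)

/-- The exponential `e^x` in the (finite-dimensional) algebra `𝔄`. -/
def expm (x : S.carrier) : S.carrier := NormedSpace.exp x

/-- The Hamiltonian `H = -∑_{𝔍,𝔍' ∈ 𝒫₊} J_{𝔍𝔍'} Θ(C_𝔍) ∘ C_𝔍'`
determined by coupling constants `Jc`. -/
def Ham (Jc : List S.Λ → List S.Λ → ℂ) : S.carrier :=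
  - ∑ J ∈ S.P, ∑ J' ∈ S.P, Jc J J' • S.twist (S.Θ (S.C J)) (S.C J')

/-- The index type of the basis `{C J : J ∈ 𝒫₊}`. -/
abbrev PIdx := {J : List S.Λ // J ∈ S.P}

/-- The index type `𝒫₊ - {∅}` of couplings across the reflection plane. -/
abbrev PIdx0 := {p : S.PIdx // p.1 ≠ []}

/-- The full matrix of coupling constants. -/
def Jmat (Jc : List S.Λ → List S.Λ → ℂ) : Matrix S.PIdx S.PIdx ℂ :=
  Matrix.of fun p q => Jc p.1 q.1

/-- The matrix `J⁰` of coupling constants across the reflection plane. -/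
def Jmat0 (Jc : List S.Λ → List S.Λ → ℂ) : Matrix S.PIdx0 S.PIdx0 ℂ :=
  Matrix.of fun p q => Jc p.1.1 q.1.1

end MajoranaSetting

/-! Both sides are conjugate-linear in `A` and in `B`, so it suffices to take `A`, `B` monomials
`Θ(C_𝔍) C_𝔍'` with `𝔍, 𝔍' ⊆ Λ₊`, which span `𝔄`. On these `Θ` exchanges the two factors up to
the sign `(-1)^{|𝔍||𝔍'|}`, moving `Θ(C_𝔍)` from `𝔄₋` to `𝔄₊` and `C_𝔍'` from `𝔄₊` to `𝔄₋`;
this flips the sign of the exponent in `ζ^{|A₋||B₊| - |A₊||B₋|}`, which is exactly what the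
antilinearity of `Θ` does to it, since `conj ζ = ζ⁻¹`. -/

lemma Complex.conj_eq_inv_of_sq_eq_neg_one {z : ℂ} (hz : z ^ 2 = -1) : starRingEnd ℂ z = z⁻¹ := by
  rcases sq_eq_sq_iff_eq_or_eq_neg.mp (hz.trans Complex.I_sq.symm) with rfl | rfl <;>
    simp [Complex.conj_I, Complex.inv_I]

namespace MajoranaSetting

variable (S : MajoranaSetting)

lemma conj_ζ_zpow (m : ℤ) : starRingEnd ℂ (S.ζ ^ m) = S.ζ ^ (-m) := by
  rw [map_zpow₀, Complex.conj_eq_inv_of_sq_eq_neg_one S.ζ_sq, inv_zpow, zpow_neg]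

lemma Θ_zero : S.Θ 0 = 0 := by
  simpa using S.Θ_smul 0 0

lemma Θ_one : S.Θ 1 = 1 :=
  calc S.Θ 1 = S.Θ 1 * S.Θ (S.Θ 1) := by rw [S.Θ_invol, mul_one]
    _ = 1 := by rw [← S.Θ_mul, one_mul, S.Θ_invol]

lemma twist_zero_left (y : S.carrier) : S.twist 0 y = 0 := by
  simpa using S.twist_smul_left 0 0 y

lemma twist_zero_right (x : S.carrier) : S.twist x 0 = 0 := by
  simpa using S.twist_smul_right 0 x 0

lemma Θ_twist_of_mem_span {s : Set S.carrier}
    (h : ∀ x ∈ s, ∀ y ∈ s, S.Θ (S.twist x y) = S.twist (S.Θ x) (S.Θ y))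
    {A B : S.carrier} (hA : A ∈ Submodule.span ℂ s) (hB : B ∈ Submodule.span ℂ s) :
    S.Θ (S.twist A B) = S.twist (S.Θ A) (S.Θ B) := by
  induction hA, hB using Submodule.span_induction₂ with
  | mem_mem x y hx hy => exact h x hx y hy
  | zero_left y => rw [twist_zero_left, Θ_zero, twist_zero_left]
  | zero_right x => rw [twist_zero_right, Θ_zero, twist_zero_right]
  | add_left x y z _ _ _ hxz hyz =>
    rw [S.twist_add_left, S.Θ_add, hxz, hyz, S.Θ_add, S.twist_add_left]
  | add_right x y z _ _ _ hxy hxz =>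
    rw [S.twist_add_right, S.Θ_add, hxy, hxz, S.Θ_add, S.twist_add_right]
  | smul_left r x y _ _ hxy => rw [S.twist_smul_left, S.Θ_smul, hxy, S.Θ_smul, S.twist_smul_left]
  | smul_right r x y _ _ hxy =>
    rw [S.twist_smul_right, S.Θ_smul, hxy, S.Θ_smul, S.twist_smul_right]

@[simp]
lemma C_nil : S.C [] = 1 := rfl

@[simp]
lemma C_cons (i : S.Λ) (J : List S.Λ) : S.C (i :: J) = S.c i * S.C J := rfl

lemma Θ_C (J : List S.Λ) : S.Θ (S.C J) = S.C (J.map S.ϑ) := by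
  induction J with
  | nil => exact S.Θ_one
  | cons i J ih => rw [C_cons, S.Θ_mul, S.Θ_c, ih, List.map_cons, C_cons]

lemma C_mem_adjoin {J : List S.Λ} {s : Set S.Λ} (hJ : ∀ i ∈ J, i ∈ s) :
    S.C J ∈ Algebra.adjoin ℂ (S.c '' s) := by
  induction J with
  | nil => exact Subalgebra.one_mem _
  | cons i J ih =>
    exact mul_mem (Algebra.subset_adjoin ⟨i, hJ i List.mem_cons_self, rfl⟩)
      (ih fun j hj => hJ j (List.mem_cons_of_mem i hj))

lemma gauge_C (J : List S.Λ) : S.gauge (S.C J) = ((-1 : ℂ) ^ J.length) • S.C J := by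
  induction J with
  | nil => simp
  | cons i J ih =>
    rw [C_cons, map_mul, S.gauge_c, ih, List.length_cons, pow_succ, mul_smul, mul_smul_comm,
      neg_one_smul, neg_mul]

lemma c_mul_C_comm {i : S.Λ} {K : List S.Λ} (hi : i ∉ K) :
    S.c i * S.C K = ((-1 : ℂ) ^ K.length) • (S.C K * S.c i) := by
  induction K with
  | nil => simp
  | cons j K ih =>
    have hij : S.c i * S.c j = -(S.c j * S.c i) :=
      eq_neg_of_add_eq_zero_left (by rw [S.clifford, if_neg (List.ne_of_not_mem_cons hi)])
    rw [C_cons, ← mul_assoc, hij, neg_mul, mul_assoc, ih (List.not_mem_of_not_mem_cons hi),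
      List.length_cons, pow_succ, mul_smul, neg_one_smul, mul_smul_comm, ← mul_assoc, smul_neg]

lemma C_mul_C_comm {J K : List S.Λ} (hJK : J.Disjoint K) :
    S.C J * S.C K = ((-1 : ℂ) ^ (J.length * K.length)) • (S.C K * S.C J) := by
  induction J with
  | nil => simp
  | cons i J ih =>
    obtain ⟨hi, hJK⟩ := List.disjoint_cons_left.mp hJK
    rw [C_cons, mul_assoc, ih hJK, mul_smul_comm, ← mul_assoc, c_mul_C_comm S hi,
      smul_mul_assoc, smul_smul, ← pow_add, mul_assoc, List.length_cons, add_one_mul, add_comm]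

/-- For `𝔍, 𝔍' ⊆ Λ₊` this is a product `A₋ A₊` of homogeneous factors, the shape on which
the twisted product is given. -/
def monomial (J K : List S.Λ) : S.carrier := S.Θ (S.C J) * S.C K

variable {S} {J K J₁ K₁ J₂ K₂ : List S.Λ}

lemma Θ_C_mem_adjoin_compl (hJ : ∀ i ∈ J, i ∈ S.Λp) :
    S.Θ (S.C J) ∈ Algebra.adjoin ℂ (S.c '' {i | i ∉ S.Λp}) := by
  rw [Θ_C]
  refine S.C_mem_adjoin fun i hi => ?_
  obtain ⟨j, hj, rfl⟩ := List.mem_map.mp hi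
  exact (S.ϑ_exch j).mp (hJ j hj)

lemma Θ_monomial (hJ : ∀ i ∈ J, i ∈ S.Λp) (hK : ∀ i ∈ K, i ∈ S.Λp) :
    S.Θ (S.monomial J K) = ((-1 : ℂ) ^ (J.length * K.length)) • S.monomial K J := by
  have hdisj : J.Disjoint (K.map S.ϑ) := fun i hiJ hiK => by
    obtain ⟨k, hk, rfl⟩ := List.mem_map.mp hiK
    exact (S.ϑ_exch k).mp (hK k hk) (hJ _ hiJ)
  rw [monomial, monomial, S.Θ_mul, S.Θ_invol, Θ_C, C_mul_C_comm S hdisj, List.length_map]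

lemma twist_monomial (hJ₁ : ∀ i ∈ J₁, i ∈ S.Λp) (hK₁ : ∀ i ∈ K₁, i ∈ S.Λp)
    (hJ₂ : ∀ i ∈ J₂, i ∈ S.Λp) (hK₂ : ∀ i ∈ K₂, i ∈ S.Λp) :
    S.twist (S.monomial J₁ K₁) (S.monomial J₂ K₂)
      = S.ζ ^ (((J₁.length % 2 : ℕ) * (K₂.length % 2 : ℕ) : ℤ)
          - ((K₁.length % 2 : ℕ) * (J₂.length % 2 : ℕ) : ℤ)) •
        (S.monomial J₁ K₁ * S.monomial J₂ K₂) := by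
  have hparity : ∀ n : ℕ, n % 2 ≤ 1 := fun n => Nat.le_of_lt_succ (Nat.mod_lt n two_pos)
  have gauge_Θ_C_mod_two : ∀ J : List S.Λ,
      S.gauge (S.Θ (S.C J)) = ((-1 : ℂ) ^ (J.length % 2)) • S.Θ (S.C J) := fun J => by
    rw [Θ_C, gauge_C, List.length_map, neg_one_pow_eq_pow_mod_two]
  have gauge_C_mod_two : ∀ J : List S.Λ,
      S.gauge (S.C J) = ((-1 : ℂ) ^ (J.length % 2)) • S.C J := fun J => by
    rw [gauge_C, neg_one_pow_eq_pow_mod_two]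
  exact S.twist_spec _ _ _ _ _ _ _ _ (hparity _) (hparity _) (hparity _) (hparity _)
    (Θ_C_mem_adjoin_compl hJ₁) (S.C_mem_adjoin hK₁)
    (Θ_C_mem_adjoin_compl hJ₂) (S.C_mem_adjoin hK₂)
    (gauge_Θ_C_mod_two J₁) (gauge_C_mod_two K₁) (gauge_Θ_C_mod_two J₂) (gauge_C_mod_two K₂)

lemma Θ_twist_monomial (hJ₁ : ∀ i ∈ J₁, i ∈ S.Λp) (hK₁ : ∀ i ∈ K₁, i ∈ S.Λp)
    (hJ₂ : ∀ i ∈ J₂, i ∈ S.Λp) (hK₂ : ∀ i ∈ K₂, i ∈ S.Λp) :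
    S.Θ (S.twist (S.monomial J₁ K₁) (S.monomial J₂ K₂))
      = S.twist (S.Θ (S.monomial J₁ K₁)) (S.Θ (S.monomial J₂ K₂)) := by
  rw [twist_monomial hJ₁ hK₁ hJ₂ hK₂, S.Θ_smul, S.Θ_mul, Θ_monomial hJ₁ hK₁,
    Θ_monomial hJ₂ hK₂, S.twist_smul_left, S.twist_smul_right, twist_monomial hK₁ hJ₁ hK₂ hJ₂,
    conj_ζ_zpow, smul_mul_smul_comm, smul_smul, smul_smul, smul_smul, neg_sub]
  ring_nf

lemma twist_Θ_C_C (hJ : ∀ i ∈ J, i ∈ S.Λp) (hK : ∀ i ∈ K, i ∈ S.Λp) :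
    S.twist (S.Θ (S.C J)) (S.C K)
      = S.ζ ^ (((J.length % 2 : ℕ) * (K.length % 2 : ℕ) : ℤ)) • S.monomial J K := by
  simpa [monomial, Θ_one] using twist_monomial hJ (K₁ := []) (J₂ := []) (by simp) (by simp) hK

variable (S)

lemma mem_span_monomial (x : S.carrier) :
    x ∈ Submodule.span ℂ (Set.range fun p : S.PIdx × S.PIdx => S.monomial p.1 p.2) := by
  refine Submodule.span_le.mpr ?_ (S.basis_span x)
  rintro _ ⟨⟨J, K⟩, rfl⟩
  change S.twist (S.Θ (S.C J.1)) (S.C K.1) ∈ _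
  rw [twist_Θ_C_C (S.P_sub _ J.2) (S.P_sub _ K.2)]
  exact Submodule.smul_mem _ _ (Submodule.subset_span ⟨(J, K), rfl⟩)

end MajoranaSetting

/-- the reflection respects the twisted product:
`Θ(A ∘ B) = Θ(A) ∘ Θ(B)` for all `A, B ∈ 𝔄`. -/
theorem reflection_respects_twist (S : MajoranaSetting) (A B : S.carrier) :
    S.Θ (S.twist A B) = S.twist (S.Θ A) (S.Θ B) := by
  refine S.Θ_twist_of_mem_span ?_ (S.mem_span_monomial A) (S.mem_span_monomial B)
  rintro _ ⟨⟨J₁, K₁⟩, rfl⟩ _ ⟨⟨J₂, K₂⟩, rfl⟩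
  exact MajoranaSetting.Θ_twist_monomial (S.P_sub _ J₁.2) (S.P_sub _ K₁.2)
    (S.P_sub _ J₂.2) (S.P_sub _ K₂.2)
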